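/- A real number λ is an eigenvalue of the n×n Jacobi matrix J if and only if π_n(λ) = 0; that is, the zeros of π_n are exactly the eigenvalues of J. -/

import Mathlib

/-!
Evaluated at `λ`, the three-term recurrence of the orthonormal polynomials,
`X π_k = √β_{k+1} π_{k+1} + α_k π_k + √β_k π_{k-1}` (with `π_{-1} = 0`), says that
`(π_0(λ), …, π_{n-1}(λ))` satisfies every row of `J v = λ v` except the last one, whose defect is
`√β_n π_n(λ)`. Conversely, as the off-diagonal entries `√β_k` do not vanish, the first `n - 1` rows
determine a solution from its first entry, so every solution is a multiple of that vector; since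
`π_0(λ) ≠ 0`, an eigenvector exists exactly when `π_n(λ) = 0`. The monic recurrence behind it holds
because the difference of its two sides has degree `≤ k` and is orthogonal to `P_0, …, P_k`.
-/

open MeasureTheory Polynomial

section MomentForm

variable {μ : Measure ℝ}

theorem integrable_eval_of_integrable_pow (hμ : ∀ n : ℕ, Integrable (fun t : ℝ => t ^ n) μ)
    (p : ℝ[X]) : Integrable (fun t => p.eval t) μ := by
  simp_rw [eval_eq_sum_range]
  exact integrable_finsetSum _ fun i _ => (hμ i).const_mul _

theorem integrable_eval_mul_eval (hμ : ∀ n : ℕ, Integrable (fun t : ℝ => t ^ n) μ)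
    (p q : ℝ[X]) : Integrable (fun t => p.eval t * q.eval t) μ := by
  simpa only [eval_mul] using integrable_eval_of_integrable_pow hμ (p * q)

variable (μ) in
noncomputable def momentForm (hμ : ∀ n : ℕ, Integrable (fun t : ℝ => t ^ n) μ) :
    LinearMap.BilinForm ℝ ℝ[X] :=
  LinearMap.mk₂ ℝ (fun p q => ∫ t, p.eval t * q.eval t ∂μ)
    (fun p₁ p₂ q => by
      simp only [eval_add, add_mul]
      exact integral_add (integrable_eval_mul_eval hμ p₁ q) (integrable_eval_mul_eval hμ p₂ q))
    (fun c p q => by simp only [eval_smul, smul_eq_mul, mul_assoc, integral_const_mul])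
    (fun p q₁ q₂ => by
      simp only [eval_add, mul_add]
      exact integral_add (integrable_eval_mul_eval hμ p q₁) (integrable_eval_mul_eval hμ p q₂))
    (fun c p q => by simp only [eval_smul, smul_eq_mul, mul_left_comm, integral_const_mul])

variable {hμ : ∀ n : ℕ, Integrable (fun t : ℝ => t ^ n) μ}

theorem momentForm_apply (p q : ℝ[X]) :
    momentForm μ hμ p q = ∫ t, p.eval t * q.eval t ∂μ := rfl

theorem momentForm_isSymm : (momentForm μ hμ).IsSymm :=
  ⟨fun p q => by simp only [momentForm_apply, mul_comm]⟩

theorem momentForm_X_mul (p q : ℝ[X]) :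
    momentForm μ hμ (X * p) q = momentForm μ hμ p (X * q) := by
  simp only [momentForm_apply, eval_mul, eval_X, mul_assoc, mul_left_comm]

end MomentForm

theorem Polynomial.degree_sub_coeff_smul_lt {R : Type*} [Ring R] {p q : R[X]} {m : ℕ}
    (hp : p.Monic) (hpm : p.degree = m) (hq : q.degree < ↑(m + 1)) :
    (q - q.coeff m • p).degree < m := by
  have hpm' : p.natDegree = m := natDegree_eq_of_degree_eq_some hpm
  rw [degree_lt_iff_coeff_zero] at hq ⊢
  intro j hj
  rw [coeff_sub, coeff_smul, smul_eq_mul]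
  rcases hj.eq_or_lt with rfl | hj
  · rw [← hpm', hp.coeff_natDegree, mul_one, sub_self]
  · rw [hq j hj, coeff_eq_zero_of_natDegree_lt (by omega : p.natDegree < j), mul_zero, sub_zero]

theorem Polynomial.degree_X_mul_of_degree_eq {R : Type*} [Semiring R] [Nontrivial R] {p : R[X]}
    {j : ℕ} (hp : p.degree = j) : (X * p).degree = ↑(j + 1) := by
  rw [X_mul, degree_mul_X, hp]
  norm_cast

theorem Polynomial.degree_X_mul_sub_lt {R : Type*} [Ring R] [Nontrivial R] {p q : R[X]} {k : ℕ}
    (hp : p.Monic) (hpk : p.degree = k) (hq : q.Monic) (hqk : q.degree = ↑(k + 1)) :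
    (X * p - q).degree < ↑(k + 1) := by
  have hXp := monic_X.mul hp
  have h := degree_sub_lt_left (q := q) (by rw [degree_X_mul_of_degree_eq hpk, hqk]) hXp.ne_zero
    (by rw [hXp.leadingCoeff, hq.leadingCoeff])
  rwa [degree_X_mul_of_degree_eq hpk] at h

section JacobiMatrix

variable (a b : ℕ → ℝ)

def jacobiMatrix (n : ℕ) : Matrix (Fin n) (Fin n) ℝ :=
  Matrix.of fun i j =>
    if i = j then a i else if (i : ℕ) + 1 = j ∨ (j : ℕ) + 1 = i then b (max i j) else 0

def jacobiRow (w : ℕ → ℝ) (k : ℕ) : ℝ :=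
  (if k = 0 then 0 else b k * w (k - 1)) + a k * w k + b (k + 1) * w (k + 1)

theorem jacobiMatrix_mulVec_apply {n : ℕ} {w : ℕ → ℝ} (hw : w n = 0) (i : Fin n) :
    (jacobiMatrix a b n).mulVec (fun j => w j) i = jacobiRow a b w i := by
  obtain ⟨k, hk⟩ := i
  have hentry : ∀ m : ℕ,
      (if k = m then a k else if k + 1 = m ∨ m + 1 = k then b (max k m) else 0) * w m =
        (if m = k then a k * w k else 0) + (if m = k + 1 then b (k + 1) * w (k + 1) else 0) +
          (if m + 1 = k then b k * w (k - 1) else 0) := by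
    intro m
    split_ifs <;> first | omega | (subst_vars; simp)
  simp only [Matrix.mulVec, dotProduct, jacobiMatrix, Matrix.of_apply, Fin.ext_iff]
  rw [Fin.sum_univ_eq_sum_range (fun m => (if k = m then a k else
      if k + 1 = m ∨ m + 1 = k then b (max k m) else 0) * w m),
    Finset.sum_congr rfl fun m _ => hentry m, Finset.sum_add_distrib, Finset.sum_add_distrib,
    Finset.sum_ite_eq', Finset.sum_ite_eq', if_pos (Finset.mem_range.2 hk)]
  have hnext : (if k + 1 ∈ Finset.range n then b (k + 1) * w (k + 1) else 0) =
      b (k + 1) * w (k + 1) := by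
    split_ifs with h
    · rfl
    · rw [show k + 1 = n by rw [Finset.mem_range] at h; omega, hw, mul_zero]
  rw [hnext, jacobiRow]
  rcases k with _ | k
  · simp
  · simp only [Nat.add_right_cancel_iff, Finset.sum_ite_eq', Finset.mem_range.2 (by omega : k < n),
      if_true, Nat.add_sub_cancel, Nat.succ_ne_zero, if_false]
    ring

variable {a b}

theorem jacobiRow_sub_mul (w p : ℕ → ℝ) (t : ℝ) (k : ℕ) :
    jacobiRow a b (fun i => w i - t * p i) k = jacobiRow a b w k - t * jacobiRow a b p k := by
  simp only [jacobiRow]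
  split_ifs <;> ring

theorem eq_zero_of_jacobiRow_eq_mul {u : ℕ → ℝ} {lam : ℝ} {m : ℕ} (hb : ∀ k < m, b (k + 1) ≠ 0)
    (hu0 : u 0 = 0) (hu : ∀ k < m, jacobiRow a b u k = lam * u k) : ∀ k ≤ m, u k = 0 := by
  intro k
  induction k using Nat.strong_induction_on with
  | _ k ih =>
    intro hk
    rcases k with _ | k
    · exact hu0
    · have hrow := hu k (by omega)
      have hprev : (if k = 0 then 0 else b k * u (k - 1)) = 0 := by
        split_ifs
        · rfl
        · rw [ih (k - 1) (by omega) (by omega), mul_zero]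
      rw [jacobiRow, hprev, ih k (by omega) (by omega), mul_zero, mul_zero, zero_add, zero_add]
        at hrow
      exact (mul_eq_zero.1 hrow).resolve_left (hb k (by omega))

theorem exists_jacobiMatrix_mulVec_eq_smul_iff {n : ℕ} {p : ℕ → ℝ} {lam : ℝ}
    (hb : ∀ k < n, b (k + 1) ≠ 0) (hp0 : p 0 ≠ 0) (hp : ∀ k, jacobiRow a b p k = lam * p k) :
    (∃ v : Fin n → ℝ, v ≠ 0 ∧ (jacobiMatrix a b n).mulVec v = lam • v) ↔ p n = 0 := by
  constructor
  · rintro ⟨v, hv, hveig⟩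
    set w : ℕ → ℝ := fun k => if h : k < n then v ⟨k, h⟩ else 0
    have hwv : (fun j : Fin n => w j) = v := funext fun j => dif_pos j.isLt
    have hwn : w n = 0 := dif_neg (lt_irrefl n)
    have hw : ∀ k < n, jacobiRow a b w k = lam * w k := fun k hk => by
      have hrow := congrFun hveig ⟨k, hk⟩
      rwa [← hwv, jacobiMatrix_mulVec_apply a b hwn] at hrow
    set t := w 0 / p 0
    have hwt : ∀ k ≤ n, w k - t * p k = 0 :=
      eq_zero_of_jacobiRow_eq_mul hb (sub_eq_zero.2 (div_mul_cancel₀ _ hp0).symm) fun k hk => by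
        rw [jacobiRow_sub_mul, hw k hk, hp k]; ring
    have ht : t ≠ 0 := fun ht => hv <| by
      rw [← hwv]
      funext j
      simpa [ht] using hwt j j.isLt.le
    simpa [hwn, ht] using hwt n le_rfl
  · intro hpn
    refine ⟨fun j => p j, fun hzero => ?_, funext fun i => ?_⟩
    · rcases n with _ | n
      · exact hp0 hpn
      · exact hp0 (congrFun hzero 0)
    · rw [jacobiMatrix_mulVec_apply a b hpn, hp]
      rfl

end JacobiMatrix

namespace OrthogonalPolynomial

variable {B : LinearMap.BilinForm ℝ ℝ[X]} {P : ℕ → ℝ[X]}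

theorem apply_eq_zero_of_degree_lt (hmonic : ∀ i, (P i).Monic) (hdeg : ∀ i, (P i).degree = i)
    {r : ℝ[X]} {m : ℕ} (hr : ∀ j < m, B r (P j) = 0) {q : ℝ[X]} (hq : q.degree < m) :
    B r q = 0 := by
  induction m generalizing q with
  | zero =>
    have hq0 : q = 0 := degree_eq_bot.mp (Nat.WithBot.lt_zero_iff.mp (by exact_mod_cast hq))
    rw [hq0, map_zero]
  | succ m ih =>
    have hlow :=
      ih (fun j hj => hr j (by omega)) (degree_sub_coeff_smul_lt (hmonic m) (hdeg m) hq)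
    rwa [map_sub, map_smul, hr m m.lt_succ_self, smul_zero, sub_zero] at hlow

theorem eq_zero_of_degree_lt_of_forall_apply_eq_zero (hpos : ∀ p, p ≠ 0 → 0 < B p p)
    (hmonic : ∀ i, (P i).Monic) (hdeg : ∀ i, (P i).degree = i) {Q : ℝ[X]} {m : ℕ}
    (hQ : Q.degree < m) (horth : ∀ j < m, B Q (P j) = 0) : Q = 0 := by
  by_contra hQ0
  exact (hpos Q hQ0).ne' (apply_eq_zero_of_degree_lt hmonic hdeg horth hQ)

theorem apply_eq_zero_of_lt (hdeg : ∀ i, (P i).degree = i)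
    (horth : ∀ i : ℕ, ∀ q : ℝ[X], q.degree < (i : ℕ) → B (P i) q = 0) {i j : ℕ} (hij : j < i) :
    B (P i) (P j) = 0 :=
  horth i (P j) (by rw [hdeg]; exact_mod_cast hij)

theorem apply_X_mul_eq_zero (hdeg : ∀ i, (P i).degree = i)
    (horth : ∀ i : ℕ, ∀ q : ℝ[X], q.degree < (i : ℕ) → B (P i) q = 0) {i j : ℕ} (hij : j + 1 < i) :
    B (P i) (X * P j) = 0 :=
  horth i _ (by rw [degree_X_mul_of_degree_eq (hdeg j)]; exact_mod_cast hij)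

theorem apply_X_mul_eq_apply_self (hmonic : ∀ i, (P i).Monic) (hdeg : ∀ i, (P i).degree = i)
    (horth : ∀ i : ℕ, ∀ q : ℝ[X], q.degree < (i : ℕ) → B (P i) q = 0) (k : ℕ) :
    B (P (k + 1)) (X * P k) = B (P (k + 1)) (P (k + 1)) := by
  rw [← sub_eq_zero, ← map_sub]
  exact horth _ _ (degree_X_mul_sub_lt (hmonic k) (hdeg k) (hmonic _) (hdeg _))

theorem X_mul_eq_three_term (hB : B.IsSymm) (hX : ∀ p q, B (X * p) q = B p (X * q))
    (hpos : ∀ p, p ≠ 0 → 0 < B p p) (hmonic : ∀ i, (P i).Monic) (hdeg : ∀ i, (P i).degree = i)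
    (horth : ∀ i : ℕ, ∀ q : ℝ[X], q.degree < (i : ℕ) → B (P i) q = 0) (k : ℕ) :
    X * P k = P (k + 1) + (B (X * P k) (P k) / B (P k) (P k)) • P k +
      (if k = 0 then 0 else B (P k) (P k) / B (P (k - 1)) (P (k - 1))) • P (k - 1) := by
  have hlow : ∀ j ≤ k, P j ∈ degreeLT ℝ (k + 1) := fun j hj =>
    mem_degreeLT.2 (by rw [hdeg]; exact_mod_cast Nat.lt_succ_of_le hj)
  rw [← sub_eq_zero]
  apply eq_zero_of_degree_lt_of_forall_apply_eq_zero hpos hmonic hdeg (m := k + 1)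
  · rw [← mem_degreeLT, show ∀ x y z w : ℝ[X], x - (y + z + w) = x - y - z - w by intros; ring]
    refine Submodule.sub_mem _ (Submodule.sub_mem _ (mem_degreeLT.2 ?_) ?_) ?_
    · exact degree_X_mul_sub_lt (hmonic k) (hdeg k) (hmonic _) (hdeg _)
    · exact Submodule.smul_mem _ _ (hlow k le_rfl)
    · exact Submodule.smul_mem _ _ (hlow _ (Nat.sub_le k 1))
  · intro j hj
    have hN : ∀ i, B (P i) (P i) ≠ 0 := fun i => (hpos _ (hmonic i).ne_zero).ne'
    have hsymm : ∀ p q, B p q = B q p := hB.eq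
    simp only [LinearMap.map_sub₂, LinearMap.map_add₂, LinearMap.map_smul₂, smul_eq_mul]
    rw [apply_eq_zero_of_lt hdeg horth hj, hX]
    obtain rfl | rfl | hjk : j = k ∨ j + 1 = k ∨ j + 1 < k := by omega
    · have hprev : (if j = 0 then 0 else B (P j) (P j) / B (P (j - 1)) (P (j - 1))) *
          B (P (j - 1)) (P j) = 0 := by
        rcases j with _ | j
        · rw [if_pos rfl, zero_mul]
        · rw [Nat.add_sub_cancel, hsymm (P j) (P (j + 1)),
            apply_eq_zero_of_lt hdeg horth j.lt_succ_self, mul_zero]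
      rw [hprev, div_mul_cancel₀ _ (hN j), hX]
      ring
    · rw [apply_X_mul_eq_apply_self hmonic hdeg horth,
        apply_eq_zero_of_lt hdeg horth j.lt_succ_self, if_neg j.succ_ne_zero, Nat.add_sub_cancel,
        div_mul_cancel₀ _ (hN j)]
      ring
    · rw [apply_X_mul_eq_zero hdeg horth hjk, apply_eq_zero_of_lt hdeg horth (by omega : j < k),
        apply_eq_zero_of_lt hdeg horth (by omega : j < k - 1)]
      ring

theorem jacobiRow_eval_orthonormal {π : ℕ → ℝ[X]} {α β : ℕ → ℝ} (hB : B.IsSymm)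
    (hX : ∀ p q, B (X * p) q = B p (X * q)) (hpos : ∀ p, p ≠ 0 → 0 < B p p)
    (hmonic : ∀ i, (P i).Monic) (hdeg : ∀ i, (P i).degree = i)
    (horth : ∀ i : ℕ, ∀ q : ℝ[X], q.degree < (i : ℕ) → B (P i) q = 0)
    (hπ : ∀ i, π i = (√(B (P i) (P i)))⁻¹ • P i) (hα : ∀ i, α i = B (X * π i) (π i))
    (hβ : ∀ i, 1 ≤ i → β i = B (P i) (P i) / B (P (i - 1)) (P (i - 1))) (lam : ℝ) (k : ℕ) :
    jacobiRow α (fun i => √(β i)) (fun i => (π i).eval lam) k = lam * (π k).eval lam := by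
  obtain ⟨s, hs_def⟩ : ∃ s : ℕ → ℝ, ∀ i, √(B (P i) (P i)) = s i := ⟨_, fun _ => rfl⟩
  have hs : ∀ i, 0 < s i := fun i => hs_def i ▸ Real.sqrt_pos.2 (hpos _ (hmonic i).ne_zero)
  have hN : ∀ i, B (P i) (P i) = s i ^ 2 := fun i => by
    rw [← hs_def, Real.sq_sqrt (hpos _ (hmonic i).ne_zero).le]
  simp only [hs_def] at hπ
  have hβs : ∀ i, √(β (i + 1)) = s (i + 1) / s i := fun i => by
    rw [hβ (i + 1) (by omega), Nat.add_sub_cancel, hN, hN, ← div_pow,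
      Real.sqrt_sq (div_pos (hs _) (hs _)).le]
  have hαs : α k = B (X * P k) (P k) / s k ^ 2 := by
    rw [hα, hπ, mul_smul_comm, LinearMap.map_smul₂, map_smul, smul_eq_mul, smul_eq_mul]
    field_simp
  have hrec := congrArg (eval lam) (X_mul_eq_three_term hB hX hpos hmonic hdeg horth k)
  simp only [eval_mul, eval_X, eval_add, eval_smul, smul_eq_mul, hN] at hrec
  simp only [jacobiRow, hπ, eval_smul, smul_eq_mul, hβs, hαs]
  have hs0 : ∀ i, s i ≠ 0 := fun i => (hs i).ne'
  rcases k with _ | k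
  · simp only [↓reduceIte, zero_mul, add_zero, zero_add] at hrec ⊢
    field_simp [hs0] at hrec ⊢
    linear_combination -hrec
  · simp only [if_neg k.succ_ne_zero, Nat.add_sub_cancel, hβs] at hrec ⊢
    field_simp [hs0] at hrec ⊢
    linear_combination -hrec

end OrthogonalPolynomial

theorem jacobi_eigenvalues_are_roots_general
    (μ : Measure ℝ)
    (hmom : ∀ n : ℕ, Integrable (fun t : ℝ => t ^ n) μ)
    (ip : ℝ[X] → ℝ[X] → ℝ)
    (hip : ∀ p q : ℝ[X], ip p q = ∫ t, p.eval t * q.eval t ∂μ)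
    (hpos : ∀ p : ℝ[X], p ≠ 0 → 0 < ip p p)
    (P : ℕ → ℝ[X])
    (hmonic : ∀ i : ℕ, (P i).Monic)
    (hdeg : ∀ i : ℕ, (P i).degree = i)
    (horth : ∀ i : ℕ, ∀ q : ℝ[X], q.degree < (i : ℕ) → ip (P i) q = 0)
    (π : ℕ → ℝ[X])
    (hπ : ∀ i : ℕ, π i = (Real.sqrt (ip (P i) (P i)))⁻¹ • P i)
    (α : ℕ → ℝ) (hα : ∀ i : ℕ, α i = ip (X * π i) (π i))
    (β : ℕ → ℝ)
    (hβ : ∀ i : ℕ, 1 ≤ i → β i = ip (P i) (P i) / ip (P (i - 1)) (P (i - 1)))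
    (n : ℕ)
    (J : Matrix (Fin n) (Fin n) ℝ)
    (hJ : ∀ i j : Fin n, J i j =
      if i = j then α i.val
      else if i.val + 1 = j.val ∨ j.val + 1 = i.val then
        Real.sqrt (β (max i.val j.val))
      else 0)
    (lam : ℝ) :
    (∃ v : Fin n → ℝ, v ≠ 0 ∧ J.mulVec v = lam • v) ↔ (π n).eval lam = 0 := by
  obtain rfl : ip = fun p q => momentForm μ hmom p q := funext₂ hip
  have hJ_eq : J = jacobiMatrix α (fun i => √(β i)) n := Matrix.ext hJ
  have hN : ∀ i, 0 < momentForm μ hmom (P i) (P i) := fun i => hpos _ (hmonic i).ne_zero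
  have hP0 : P 0 = 1 := (hmonic 0).degree_le_zero_iff_eq_one.1 (by rw [hdeg, Nat.cast_zero])
  rw [hJ_eq]
  refine exists_jacobiMatrix_mulVec_eq_smul_iff (fun k _ => ?_) ?_
    (OrthogonalPolynomial.jacobiRow_eval_orthonormal momentForm_isSymm momentForm_X_mul hpos
      hmonic hdeg horth hπ hα hβ lam)
  · rw [hβ (k + 1) (by omega)]
    exact (Real.sqrt_pos.2 (div_pos (hN _) (hN _))).ne'
  · rw [hπ, eval_smul, smul_eq_mul]
    refine mul_ne_zero (inv_ne_zero (Real.sqrt_pos.2 (hN 0)).ne') ?_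
    rw [hP0, eval_one]
    exact one_ne_zero

/-- λ is an eigenvalue of the n×n Jacobi matrix J iff π_n(λ) = 0. -/
theorem jacobi_eigenvalues_are_roots
    (μ : Measure ℝ) [IsProbabilityMeasure μ]
    (hmom : ∀ n : ℕ, Integrable (fun t : ℝ => t ^ n) μ)
    (ip : ℝ[X] → ℝ[X] → ℝ)
    (hip : ∀ p q : ℝ[X], ip p q = ∫ t, p.eval t * q.eval t ∂μ)
    (hpos : ∀ p : ℝ[X], p ≠ 0 → 0 < ip p p)
    (P : ℕ → ℝ[X])
    (hmonic : ∀ i : ℕ, (P i).Monic)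
    (hdeg : ∀ i : ℕ, (P i).degree = i)
    (horth : ∀ i : ℕ, ∀ q : ℝ[X], q.degree < (i : ℕ) → ip (P i) q = 0)
    (π : ℕ → ℝ[X])
    (hπ : ∀ i : ℕ, π i = (Real.sqrt (ip (P i) (P i)))⁻¹ • P i)
    (α : ℕ → ℝ) (hα : ∀ i : ℕ, α i = ip (X * π i) (π i))
    (β : ℕ → ℝ)
    (hβ : ∀ i : ℕ, 1 ≤ i → β i = ip (P i) (P i) / ip (P (i - 1)) (P (i - 1)))
    (n : ℕ) (hn : 1 ≤ n)
    (J : Matrix (Fin n) (Fin n) ℝ)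
    (hJ : ∀ i j : Fin n, J i j =
      if i = j then α i.val
      else if i.val + 1 = j.val ∨ j.val + 1 = i.val then
        Real.sqrt (β (max i.val j.val))
      else 0)
    (lam : ℝ) :
    (∃ v : Fin n → ℝ, v ≠ 0 ∧ J.mulVec v = lam • v) ↔ (π n).eval lam = 0 :=
  jacobi_eigenvalues_are_roots_general μ hmom ip hip hpos P hmonic hdeg horth π hπ α hα β hβ n J hJ
    lam
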